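/- arXiv:1209.5199 — 3 statements merged into one kernel-verified Lean document; each statement's English description precedes it below -/
import Mathlib

section
/- Let δ(p,c) = |p−c| − r_c be an additively weighted distance on ℝ² for a finite set of weighted sites. Each cell cell(c) = { p : δ(p,c) ≤ δ(p,c') for all sites c' } is star-shaped with respect to c; in particular it is connected. -/
theorem stmt9 {ι : Type*} [Finite ι] (c : ι → EuclideanSpace ℝ (Fin 2)) (rad : ι → ℝ)
    (hrad : ∀ i, 0 ≤ rad i)
    (hnc : ∀ i j, i ≠ j →
      ¬ Metric.closedBall (c i) (rad i) ⊆ Metric.closedBall (c j) (rad j))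
    (cell : ι → Set (EuclideanSpace ℝ (Fin 2)))
    (hcell : ∀ i, cell i = {p | ∀ j, dist p (c i) - rad i ≤ dist p (c j) - rad j}) :
    ∀ i, StarConvex ℝ (c i) (cell i) ∧ IsConnected (cell i) := by
  intro i
  -- star convexity
  have hstar : StarConvex ℝ (c i) (cell i) := by
    intro p hp a b ha hb hab
    rw [hcell] at hp ⊢
    intro j
    have hpj := hp j
    have hd1 : dist (a • c i + b • p) (c i) = b * dist p (c i) := by
      have : a • c i + b • p - c i = b • (p - c i) := by
        rw [show a = (1:ℝ) - b by linarith]; module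
      rw [dist_eq_norm, this, norm_smul, Real.norm_eq_abs, abs_of_nonneg hb,
        ← dist_eq_norm]
    have hd2 : dist p (c j) ≤ dist p (a • c i + b • p) + dist (a • c i + b • p) (c j) :=
      dist_triangle _ _ _
    have hd3 : dist p (a • c i + b • p) = a * dist p (c i) := by
      have : p - (a • c i + b • p) = a • (p - c i) := by
        rw [show a = (1:ℝ) - b by linarith]; module
      rw [dist_eq_norm, this, norm_smul, Real.norm_eq_abs, abs_of_nonneg ha,
        ← dist_eq_norm]
    rw [hd3] at hd2
    rw [hd1]
    nlinarith [dist_nonneg (x := p) (y := c i)]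
  have hmem : c i ∈ cell i := by
    rw [hcell]
    intro j
    rcases eq_or_ne i j with rfl | hij
    · exact le_rfl
    · by_contra h
      push_neg at h
      rw [dist_self] at h
      apply hnc i j hij
      apply Metric.closedBall_subset_closedBall'
      rw [dist_comm] at h ⊢
      linarith
  refine ⟨hstar, ?_, ?_⟩
  · exact ⟨c i, hmem⟩
  · have : cell i = ⋃₀ ((fun p => segment ℝ (c i) p) '' cell i) := by
      ext q
      constructor
      · intro hq
        exact ⟨segment ℝ (c i) q, ⟨q, hq, rfl⟩, right_mem_segment ℝ _ _⟩
      · rintro ⟨s, ⟨p, hp, rfl⟩, hq⟩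
        exact hstar.segment_subset hp hq
    rw [this]
    apply isPreconnected_sUnion (c i)
    · rintro s ⟨p, hp, rfl⟩
      exact left_mem_segment ℝ _ _
    · rintro s ⟨p, hp, rfl⟩
      exact (convex_segment _ _).isPreconnected
end

section
/- Let B, R be disjoint finite sets of weighted sites (disk centers with radii) in ℝ², with no disk contained in another, such that the disks centered at B cover a point set P and the disks centered at R cover P. Then for every p ∈ P there exist b ∈ B and r ∈ R whose cells in the additively weighted Voronoi diagram of B ∪ R are adjacent (share a boundary point) and whose disks both contain p. -/
attribute [local instance] Classical.propDecidable

local notation "E2" => EuclideanSpace ℝ (Fin 2)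

/-- Key extraction lemma: if `q` lies on a segment from `p` to a site `s` whose disk
contains `p`, and the blue and red weighted minima at `q` agree, then the minimizing
blue and red sites at `q` have disks containing `p` and cells containing `q`. -/
lemma stmt12_aux (B R : Finset E2) (rad : E2 → ℝ)
    (hB : B.Nonempty) (hR : R.Nonempty) (p s q : E2)
    (hsU : s ∈ B ∪ R) (hps : dist p s ≤ rad s)
    (hseg : dist p q + dist q s = dist p s)
    (heq : B.inf' hB (fun c => dist q c - rad c) = R.inf' hR (fun c => dist q c - rad c)) :
    ∃ b ∈ B, ∃ r ∈ R, dist p b ≤ rad b ∧ dist p r ≤ rad r ∧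
      (∀ c ∈ B ∪ R, dist q b - rad b ≤ dist q c - rad c) ∧
      (∀ c ∈ B ∪ R, dist q r - rad r ≤ dist q c - rad c) := by
  obtain ⟨b, hbB, hbmin⟩ := B.exists_mem_eq_inf' hB (fun c => dist q c - rad c)
  obtain ⟨r, hrR, hrmin⟩ := R.exists_mem_eq_inf' hR (fun c => dist q c - rad c)
  have hmin : ∀ c ∈ B ∪ R, dist q b - rad b ≤ dist q c - rad c := by
    intro c hc
    rcases Finset.mem_union.1 hc with hc | hc
    · rw [← hbmin]; exact Finset.inf'_le _ hc
    · rw [← hbmin, heq]; exact Finset.inf'_le _ hc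
  have hmin' : ∀ c ∈ B ∪ R, dist q r - rad r ≤ dist q c - rad c := by
    intro c hc
    have : dist q r - rad r = dist q b - rad b := by rw [← hrmin, ← heq, hbmin]
    rw [this]; exact hmin c hc
  have hdisk : ∀ c : E2, dist q c - rad c ≤ dist q s - rad s → dist p c ≤ rad c := by
    intro c hc
    have h1 : dist p c ≤ dist p q + dist q c := dist_triangle p q c
    linarith
  exact ⟨b, hbB, r, hrR, hdisk b (hmin s hsU), hdisk r (hmin' s hsU),
    hmin, hmin'⟩

theorem stmt12 (B R P : Finset (EuclideanSpace ℝ (Fin 2)))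
    (rad : EuclideanSpace ℝ (Fin 2) → ℝ) (hrad : ∀ x, 0 ≤ rad x)
    (hdisj : Disjoint B R)
    (hnc : ∀ x ∈ B ∪ R, ∀ y ∈ B ∪ R, x ≠ y →
      ¬ Metric.closedBall x (rad x) ⊆ Metric.closedBall y (rad y))
    (hgen : ∀ x ∈ B ∪ R, ∀ y ∈ B ∪ R, ∀ z ∈ B ∪ R,
      x ≠ y → y ≠ z → x ≠ z → ¬ Collinear ℝ ({x, y, z} : Set (EuclideanSpace ℝ (Fin 2))))
    (hBcov : ∀ p ∈ P, ∃ b ∈ B, p ∈ Metric.closedBall b (rad b))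
    (hRcov : ∀ p ∈ P, ∃ r ∈ R, p ∈ Metric.closedBall r (rad r))
    (cell : EuclideanSpace ℝ (Fin 2) → Set (EuclideanSpace ℝ (Fin 2)))
    (hcell : ∀ c, cell c =
      {p | ∀ c' ∈ B ∪ R, dist p c - rad c ≤ dist p c' - rad c'}) :
    ∀ p ∈ P, ∃ b ∈ B, ∃ r ∈ R,
      p ∈ Metric.closedBall b (rad b) ∧ p ∈ Metric.closedBall r (rad r) ∧
      (closure (cell b) ∩ closure (cell r)).Nonempty := by
  intro p hp
  obtain ⟨b0, hb0, hpb0⟩ := hBcov p hp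
  obtain ⟨r0, hr0, hpr0⟩ := hRcov p hp
  rw [Metric.mem_closedBall] at hpb0 hpr0
  have hB : B.Nonempty := ⟨b0, hb0⟩
  have hR : R.Nonempty := ⟨r0, hr0⟩
  set g : EuclideanSpace ℝ (Fin 2) → ℝ :=
    fun x => B.inf' hB (fun c => dist x c - rad c) - R.inf' hR (fun c => dist x c - rad c)
    with hg
  have hgcont : Continuous g := by
    apply Continuous.sub
    · apply continuous_iff_continuousAt.2
      intro x
      exact ContinuousAt.finset_inf'_apply hB fun i _ =>
        ((continuous_id.dist continuous_const).sub continuous_const).continuousAt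
    · apply continuous_iff_continuousAt.2
      intro x
      exact ContinuousAt.finset_inf'_apply hR fun i _ =>
        ((continuous_id.dist continuous_const).sub continuous_const).continuousAt
  -- non-containment gives strict sign at the centers
  have hctr : ∀ s ∈ B ∪ R, ∀ c ∈ B ∪ R, c ≠ s → - rad s < dist s c - rad c := by
    intro s hs c hc hne
    by_contra h
    push_neg at h
    exact hnc s hs c hc (Ne.symm hne)
      (Metric.closedBall_subset_closedBall' (by have := dist_comm s c; linarith))
  have hgr0 : 0 < g r0 := by
    obtain ⟨b, hbB, hbmin⟩ := B.exists_mem_eq_inf' hB (fun c => dist r0 c - rad c)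
    have hne : b ≠ r0 := fun h => (Finset.disjoint_left.1 hdisj hbB) (h ▸ hr0)
    have h1 : - rad r0 < dist r0 b - rad b :=
      hctr r0 (Finset.mem_union_right _ hr0) b (Finset.mem_union_left _ hbB) hne
    have h2 : R.inf' hR (fun c => dist r0 c - rad c) ≤ dist r0 r0 - rad r0 :=
      Finset.inf'_le _ hr0
    simp only [dist_self] at h2
    simp only [hg]
    rw [← hbmin] at h1
    linarith
  have hgb0 : g b0 < 0 := by
    obtain ⟨r, hrR, hrmin⟩ := R.exists_mem_eq_inf' hR (fun c => dist b0 c - rad c)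
    have hne : r ≠ b0 := fun h => (Finset.disjoint_left.1 hdisj hb0) (h ▸ hrR)
    have h1 : - rad b0 < dist b0 r - rad r :=
      hctr b0 (Finset.mem_union_left _ hb0) r (Finset.mem_union_right _ hrR) hne
    have h2 : B.inf' hB (fun c => dist b0 c - rad c) ≤ dist b0 b0 - rad b0 :=
      Finset.inf'_le _ hb0
    simp only [dist_self] at h2
    simp only [hg]
    rw [← hrmin] at h1
    linarith
  -- common final step given a point q on a segment with g q = 0
  have final : ∀ s ∈ B ∪ R, dist p s ≤ rad s → ∀ q : EuclideanSpace ℝ (Fin 2),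
      dist p q + dist q s = dist p s → g q = 0 →
      ∃ b ∈ B, ∃ r ∈ R,
        p ∈ Metric.closedBall b (rad b) ∧ p ∈ Metric.closedBall r (rad r) ∧
        (closure (cell b) ∩ closure (cell r)).Nonempty := by
    intro s hsU hps q hseg hq0
    have heq : B.inf' hB (fun c => dist q c - rad c) = R.inf' hR (fun c => dist q c - rad c) := by
      have := hq0
      simp only [hg] at this
      linarith
    obtain ⟨b, hbB, r, hrR, hpb, hpr, hcb, hcr⟩ :=
      stmt12_aux B R rad hB hR p s q hsU hps hseg heq
    refine ⟨b, hbB, r, hrR, Metric.mem_closedBall.2 hpb, Metric.mem_closedBall.2 hpr,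
      ⟨q, ?_, ?_⟩⟩
    · exact subset_closure (by rw [hcell]; exact hcb)
    · exact subset_closure (by rw [hcell]; exact hcr)
  -- segment machinery
  have seg : ∀ s : EuclideanSpace ℝ (Fin 2), ∀ t ∈ Set.Icc (0:ℝ) 1,
      dist p (p + t • (s - p)) + dist (p + t • (s - p)) s = dist p s := by
    intro s t ht
    have h1 : dist p (p + t • (s - p)) = t * dist p s := by
      simp only [dist_eq_norm]
      have e : p - (p + t • (s - p)) = t • (p - s) := by module
      rw [e, norm_smul, Real.norm_eq_abs, abs_of_nonneg ht.1]
    have h2 : dist (p + t • (s - p)) s = (1 - t) * dist p s := by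
      simp only [dist_eq_norm]
      have e : p + t • (s - p) - s = (1 - t) • (p - s) := by module
      have h01 : (0:ℝ) ≤ 1 - t := by linarith [ht.2]
      rw [e, norm_smul, Real.norm_eq_abs, abs_of_nonneg h01]
    rw [h1, h2]; ring
  rcases le_or_gt (g p) 0 with hgp | hgp
  · -- go toward r0
    have hcont : ContinuousOn (fun t : ℝ => g (p + t • (r0 - p))) (Set.Icc 0 1) :=
      (hgcont.comp (continuous_const.add (continuous_id.smul continuous_const))).continuousOn
    have hIVT := intermediate_value_Icc (by norm_num : (0:ℝ) ≤ 1) hcont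
    have h0mem : (0:ℝ) ∈ Set.Icc (g (p + (0:ℝ) • (r0 - p))) (g (p + (1:ℝ) • (r0 - p))) := by
      constructor
      · simpa using hgp
      · have : p + (1:ℝ) • (r0 - p) = r0 := by module
        rw [this]; exact le_of_lt hgr0
    obtain ⟨t, ht, hqt⟩ := hIVT h0mem
    exact final r0 (Finset.mem_union_right _ hr0) hpr0 _ (seg r0 t ht) hqt
  · -- go toward b0
    have hcont : ContinuousOn (fun t : ℝ => g (p + t • (b0 - p))) (Set.Icc 0 1) :=
      (hgcont.comp (continuous_const.add (continuous_id.smul continuous_const))).continuousOn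
    have hIVT := intermediate_value_Icc' (by norm_num : (0:ℝ) ≤ 1) hcont
    have h0mem : (0:ℝ) ∈ Set.Icc (g (p + (1:ℝ) • (b0 - p))) (g (p + (0:ℝ) • (b0 - p))) := by
      constructor
      · have : p + (1:ℝ) • (b0 - p) = b0 := by module
        rw [this]; exact le_of_lt hgb0
      · simpa using le_of_lt hgp
    obtain ⟨t, ht, hqt⟩ := hIVT h0mem
    exact final b0 (Finset.mem_union_left _ hb0) hpb0 _ (seg b0 t ht) hqt
end

section
/- Let k, δ, c₁, c₂, c₃, ε be positive reals with 0 < δ < 1, 0 < ε < 1, and set c' = 2c₁(c₂+c₃)^δ, k = (c'·(2/ε − 1))^(1/δ), r = k/(c₂+c₃). Then for any nonnegative reals satisfying |R| ≤ |B| + 2c₁·n/r^δ with n = |R| + |B|, one has |R| ≤ |B| + (ε/(2−ε))·(|R|+|B|), and hence |B| ≥ (1−ε)|R|. -/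
theorem stmt18 (c₁ c₂ c₃ δ ε c' k r : ℝ)
    (hc₁ : 0 < c₁) (hc₂ : 0 < c₂) (hc₃ : 0 < c₃)
    (hδ0 : 0 < δ) (hδ1 : δ < 1) (hε0 : 0 < ε) (hε1 : ε < 1)
    (hc' : c' = 2 * c₁ * (c₂ + c₃) ^ δ)
    (hk : k = (c' * (2 / ε - 1)) ^ (1 / δ))
    (hr : r = k / (c₂ + c₃))
    (Rsz Bsz n : ℝ) (hR : 0 ≤ Rsz) (hB : 0 ≤ Bsz) (hn : n = Rsz + Bsz)
    (hsep : Rsz ≤ Bsz + 2 * c₁ * n / r ^ δ) :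
    Rsz ≤ Bsz + ε / (2 - ε) * (Rsz + Bsz) ∧ Bsz ≥ (1 - ε) * Rsz := by
  have hcc : 0 < c₂ + c₃ := by linarith
  have hccδ : 0 < (c₂ + c₃) ^ δ := Real.rpow_pos_of_pos hcc δ
  have hc'pos : 0 < c' := by rw [hc']; positivity
  have hεlt2 : ε < 2 := by linarith
  have h2ε : 1 < 2 / ε := by rw [lt_div_iff₀ hε0]; linarith
  have hbase : 0 < c' * (2 / ε - 1) := by
    apply mul_pos hc'pos; linarith
  have hkpos : 0 < k := by
    rw [hk]; exact Real.rpow_pos_of_pos hbase _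
  have hkδ : k ^ δ = c' * (2 / ε - 1) := by
    rw [hk, ← Real.rpow_mul hbase.le, one_div,
      inv_mul_cancel₀ (ne_of_gt hδ0), Real.rpow_one]
  have hrδ : r ^ δ = k ^ δ / (c₂ + c₃) ^ δ :=
    hr ▸ Real.div_rpow hkpos.le hcc.le δ
  have h2ne : (2 : ℝ) - ε ≠ 0 := by linarith
  have hεne : (2 : ℝ) / ε - 1 ≠ 0 := by linarith
  have hrδ2 : r ^ δ = 2 * c₁ * (2 / ε - 1) := by
    rw [hrδ, hkδ, hc']; field_simp
  have hkey : 2 * c₁ * n / r ^ δ = ε / (2 - ε) * n := by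
    rw [hrδ2]
    field_simp
  have h1 : Rsz ≤ Bsz + ε / (2 - ε) * (Rsz + Bsz) := by
    rw [hkey, hn] at hsep; exact hsep
  refine ⟨h1, ?_⟩
  have hpos : 0 < 2 - ε := by linarith
  nlinarith [mul_le_mul_of_nonneg_right h1 hpos.le,
    div_mul_cancel₀ ε h2ne]
end
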